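/- With δ_n⁺ defined by δ₀⁺(k,l) = kl and the recursion δ_n⁺(k,l) = max_{i,j} p[δ_{n-1}⁺(i,j)+δ_{n-1}⁺(k-i,l-j)] + (1/2-p)[δ_{n-1}⁺(i,l-j)+δ_{n-1}⁺(k-i,j)] (index ranges k-min(k,2^{n-1}) ≤ i ≤ min(k,2^{n-1}), l-min(l,2^{n-1}) ≤ j ≤ min(l,2^{n-1})) with p ∈ [1/4,1/2], we have δ_n⁺(k,l) ≤ min(k,l) for all n ≥ 1 and 0 ≤ k,l ≤ 2^n. -/

import Mathlib

/-!
Induct on `n` from `n = 0`, where `k, l ≤ 1` and so `kl = min(k, l)`. In the recursion both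
brackets sum `δ_{n-1}⁺` over a splitting of `(k, l)` into two pairs, and `min` is superadditive
on such splittings, so each bracket is at most `min(k, l)`. The nonnegative weights `p` and
`1/2 - p` sum to `1/2`.
-/

/-- The recursively defined quantity `δ_n⁺(k,l)` from Definition 4 of the paper:
`δ₀⁺(k,l) = kl` and
`δ_n⁺(k,l) = max_{i,j} p[δ_{n-1}⁺(i,j)+δ_{n-1}⁺(k-i,l-j)] + (1/2-p)[δ_{n-1}⁺(i,l-j)+δ_{n-1}⁺(k-i,j)]`,
the max running over `k - min(k,2^{n-1}) ≤ i ≤ min(k,2^{n-1})` and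
`l - min(l,2^{n-1}) ≤ j ≤ min(l,2^{n-1})` (a nonempty range whenever `k,l ≤ 2^n`). -/
noncomputable def deltaP (p : ℝ) : ℕ → ℕ → ℕ → ℝ
  | 0, k, l => (k : ℝ) * l
  | n + 1, k, l =>
    let s := (Finset.Icc (k - min k (2 ^ n)) (min k (2 ^ n))) ×ˢ
             (Finset.Icc (l - min l (2 ^ n)) (min l (2 ^ n)))
    if h : s.Nonempty then
      s.sup' h (fun ij =>
        p * (deltaP p n ij.1 ij.2 + deltaP p n (k - ij.1) (l - ij.2)) +
        (1 / 2 - p) * (deltaP p n ij.1 (l - ij.2) + deltaP p n (k - ij.1) ij.2))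
    else 0

theorem Nat.min_add_min_sub_le_min {i j k l : ℕ} (hi : i ≤ k) (hj : j ≤ l) :
    min i j + min (k - i) (l - j) ≤ min k l := by
  omega

lemma deltaP_zero_le_min (p : ℝ) {k l : ℕ} (hk : k ≤ 1) (hl : l ≤ 1) :
    deltaP p 0 k l ≤ (min k l : ℕ) := by
  interval_cases k <;> interval_cases l <;> simp [deltaP]

lemma deltaP_succ_le_of_forall (p : ℝ) {n k l : ℕ} {c : ℝ}
    (hk : k ≤ 2 ^ (n + 1)) (hl : l ≤ 2 ^ (n + 1))
    (h : ∀ i ≤ k, ∀ j ≤ l, i ≤ 2 ^ n → k - i ≤ 2 ^ n → j ≤ 2 ^ n → l - j ≤ 2 ^ n →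
      p * (deltaP p n i j + deltaP p n (k - i) (l - j)) +
        (1 / 2 - p) * (deltaP p n i (l - j) + deltaP p n (k - i) j) ≤ c) :
    deltaP p (n + 1) k l ≤ c := by
  rw [pow_succ] at hk hl
  have hne : ((Finset.Icc (k - min k (2 ^ n)) (min k (2 ^ n))) ×ˢ
      (Finset.Icc (l - min l (2 ^ n)) (min l (2 ^ n)))).Nonempty := by
    rw [Finset.nonempty_product, Finset.nonempty_Icc, Finset.nonempty_Icc]
    omega
  rw [deltaP, dif_pos hne, Finset.sup'_le_iff]
  rintro ⟨i, j⟩ hij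
  simp only [Finset.mem_product, Finset.mem_Icc] at hij
  exact h i (by omega) j (by omega) (by omega) (by omega) (by omega) (by omega)

lemma deltaP_succ_le_min {p : ℝ} (hp₀ : 0 ≤ p) (hp : p ≤ 1 / 2) {n k l : ℕ}
    (ih : ∀ i j, i ≤ 2 ^ n → j ≤ 2 ^ n → deltaP p n i j ≤ (min i j : ℕ))
    (hk : k ≤ 2 ^ (n + 1)) (hl : l ≤ 2 ^ (n + 1)) :
    deltaP p (n + 1) k l ≤ (min k l : ℕ) := by
  have hq : 0 ≤ 1 / 2 - p := by linarith
  refine deltaP_succ_le_of_forall p hk hl fun i hik j hjl hi hki hj hlj => ?_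
  have hjl' : l - j ≤ l := Nat.sub_le l j
  calc p * (deltaP p n i j + deltaP p n (k - i) (l - j)) +
        (1 / 2 - p) * (deltaP p n i (l - j) + deltaP p n (k - i) j)
      ≤ p * (((min i j : ℕ) : ℝ) + (min (k - i) (l - j) : ℕ)) +
        (1 / 2 - p) * (((min i (l - j) : ℕ) : ℝ) + (min (k - i) j : ℕ)) := by
        gcongr <;> exact ih _ _ ‹_› ‹_›
    _ ≤ p * (min k l : ℕ) + (1 / 2 - p) * (min k l : ℕ) := by
        gcongr
        · exact_mod_cast Nat.min_add_min_sub_le_min hik hjl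
        · have := Nat.min_add_min_sub_le_min hik hjl'
          rw [Nat.sub_sub_self hjl] at this
          exact_mod_cast this
    _ ≤ (min k l : ℕ) := by
        have : (0 : ℝ) ≤ (min k l : ℕ) := Nat.cast_nonneg _
        linarith

theorem deltaP_le_min_general (p : ℝ) (hp₁ : 1 / 4 ≤ p) (hp₂ : p ≤ 1 / 2)
    (n k l : ℕ) (hk : k ≤ 2 ^ n) (hl : l ≤ 2 ^ n) :
    deltaP p n k l ≤ (min k l : ℕ) := by
  induction n generalizing k l with
  | zero => exact deltaP_zero_le_min p hk hl
  | succ n ih => exact deltaP_succ_le_min (by linarith) hp₂ ih hk hl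

/-- `δ_n⁺(k,l) ≤ min(k,l)` for all `n ≥ 1`, `0 ≤ k,l ≤ 2^n` and
`p ∈ [1/4,1/2]`. -/
theorem deltaP_le_min (p : ℝ) (hp₁ : 1 / 4 ≤ p) (hp₂ : p ≤ 1 / 2)
    (n k l : ℕ) (hn : 1 ≤ n) (hk : k ≤ 2 ^ n) (hl : l ≤ 2 ^ n) :
    deltaP p n k l ≤ (min k l : ℕ) :=
  deltaP_le_min_general p hp₁ hp₂ n k l hk hl
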